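/- For a linear L-layer network with overall gradient matrix G = [G^L_L, ..., G^L_1] where G^L_k = (∏_{i=L}^{k+1} W_i)ᵀ ⊗ Z_{k−1}, the rank satisfies max_k rank(Z_{k−1}) ≤ rank(G) ≤ D · Σ_{k=1}^L rank(Z_{k−1}), provided each weight product ∏_{i=L}^{k+1} W_i is nonzero for the lower bound (e.g., invertible). -/

import Mathlib

/-!
Column `(k, a, d)` of `G` is column `(a, d)` of the block `(S (k+1))ᵀ ⊗ Z k`, so rank is
subadditive over the blocks; each row strip `b` of such a block factors through `Z k`, giving
`rank ((S (k+1))ᵀ ⊗ Z k) ≤ D * rank (Z k)`. Conversely, `S (k+1)` is invertible, hence has a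
nonzero entry `s`, and `s • Z k` is a submatrix of `G`.
-/

open Matrix Kronecker

namespace Matrix

variable {K ι l m n p : Type*} [Field K]

theorem rank_add_le [Fintype n] (A B : Matrix m n K) : (A + B).rank ≤ A.rank + B.rank := by
  rw [rank, rank, rank, mulVecLin_add]
  refine (Submodule.finrank_mono ?_).trans (Submodule.finrank_add_le_finrank_add_finrank _ _)
  rintro _ ⟨v, rfl⟩
  exact Submodule.add_mem_sup (LinearMap.mem_range_self _ v) (LinearMap.mem_range_self _ v)

theorem rank_finsetSum_le [Fintype n] {η : Type*} (s : Finset η) (A : η → Matrix m n K) :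
    (∑ i ∈ s, A i).rank ≤ ∑ i ∈ s, (A i).rank := by
  classical
  induction s using Finset.induction with
  | empty => simp
  | insert i s hi ih =>
    rw [Finset.sum_insert hi, Finset.sum_insert hi]
    exact (rank_add_le _ _).trans (add_le_add_right ih _)

theorem rank_le_sum_rank_submatrix_prodMk_right [Fintype ι] [Fintype n]
    (M : Matrix m (ι × n) K) : M.rank ≤ ∑ i, (M.submatrix id (Prod.mk i)).rank := by
  classical
  let P (i : ι) : Matrix n (ι × n) K := (1 : Matrix (ι × n) (ι × n) K).submatrix (Prod.mk i) id
  have hM : M = ∑ i, M.submatrix id (Prod.mk i) * P i := by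
    ext r ⟨j, c⟩
    simp [P, sum_apply, mul_apply, one_apply, Prod.ext_iff, ite_and]
  calc M.rank = (∑ i, M.submatrix id (Prod.mk i) * P i).rank := congrArg rank hM
    _ ≤ ∑ i, (M.submatrix id (Prod.mk i) * P i).rank := rank_finsetSum_le _ _
    _ ≤ _ := Finset.sum_le_sum fun i _ => rank_mul_le_left _ _

theorem rank_le_sum_rank_submatrix_prodMk_left [Fintype ι] [Fintype m] [Fintype n]
    (M : Matrix (ι × m) n K) : M.rank ≤ ∑ i, (M.submatrix (Prod.mk i) id).rank := by
  rw [← rank_transpose]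
  refine (rank_le_sum_rank_submatrix_prodMk_right Mᵀ).trans_eq ?_
  refine Finset.sum_congr rfl fun i _ => ?_
  rw [← rank_transpose, transpose_submatrix, transpose_transpose]

theorem rank_kronecker_le_card_mul_rank [Fintype l] [Fintype m] [Fintype n] [Fintype p]
    (A : Matrix l m K) (B : Matrix n p K) : (A ⊗ₖ B).rank ≤ Fintype.card l * B.rank := by
  classical
  have hrow (i : l) : (A ⊗ₖ B).submatrix (Prod.mk i) id =
      B * of fun c (jc : m × p) => A i jc.1 * (1 : Matrix p p K) c jc.2 := by
    ext r ⟨j, c⟩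
    simp [mul_apply, one_apply, mul_comm]
  calc (A ⊗ₖ B).rank ≤ ∑ i : l, ((A ⊗ₖ B).submatrix (Prod.mk i) id).rank :=
        rank_le_sum_rank_submatrix_prodMk_left _
    _ ≤ ∑ _i : l, B.rank := Finset.sum_le_sum fun i _ => hrow i ▸ rank_mul_le_left _ _
    _ = Fintype.card l * B.rank := by simp

theorem rank_le_rank_kronecker_of_ne_zero [Fintype m] [Fintype p] {A : Matrix l m K}
    (hA : A ≠ 0) (B : Matrix n p K) : B.rank ≤ (A ⊗ₖ B).rank := by
  obtain ⟨i, j, hij⟩ : ∃ i j, A i j ≠ 0 := by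
    by_contra! h
    exact hA (ext h)
  have hblock : (A ⊗ₖ B).submatrix (Prod.mk i) (Prod.mk j) = A i j • B := by
    ext; simp
  calc B.rank = (A i j • B).rank :=
        (rank_smul_of_mem_nonZeroDivisors B (mem_nonZeroDivisors_of_ne_zero hij)).symm
    _ ≤ (A ⊗ₖ B).rank := hblock ▸ rank_submatrix_le _ _ _

theorem rank_le_rank_kronecker_of_isUnit [Fintype m] [DecidableEq m]
    {A : Matrix m m K} (hA : IsUnit A) (B : Matrix n m K) : B.rank ≤ (A ⊗ₖ B).rank := by
  cases isEmpty_or_nonempty m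
  · have hB : B.rank = 0 := by simpa using B.rank_le_card_width
    exact hB ▸ Nat.zero_le _
  · exact rank_le_rank_kronecker_of_ne_zero hA.ne_zero B

end Matrix

theorem rank_bounds_linear_network_gradient_general (N D L : ℕ)
    (W : ℕ → Matrix (Fin D) (Fin D) ℝ) (hW : ∀ i : ℕ, IsUnit (W i))
    (Z : ℕ → Matrix (Fin N) (Fin D) ℝ)
    -- `S k = W_L * W_{L-1} * ⋯ * W_{k+1}` is the (descending) suffix weight product
    (S : ℕ → Matrix (Fin D) (Fin D) ℝ)
    (hS : ∀ i : ℕ, S i = ((((List.range' (i + 1) (L - i))).reverse).map W).prod)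
    -- `G` is the horizontal concatenation of the blocks `G^L_k = (S k)ᵀ ⊗ Z (k-1)`,
    -- for `k = 1, …, L` (block `c.1 : Fin L` corresponds to layer `k = c.1 + 1`)
    (G : Matrix (Fin D × Fin N) (Fin L × (Fin D × Fin D)) ℝ)
    (hG : G = Matrix.of fun r (c : Fin L × (Fin D × Fin D)) =>
        (((S ((c.1 : ℕ) + 1))ᵀ ⊗ₖ Z (c.1 : ℕ)) r c.2)) :
    (∀ k : Fin L, (Z (k : ℕ)).rank ≤ G.rank) ∧
      G.rank ≤ D * ∑ k ∈ Finset.range L, (Z k).rank := by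
  have hblock (k : Fin L) : G.submatrix id (Prod.mk k) = (S (k + 1))ᵀ ⊗ₖ Z (k : ℕ) := by
    ext; simp [hG]
  have hunit (i : ℕ) : IsUnit (S i)ᵀ := by
    rw [hS, isUnit_transpose]
    exact List.prod_isUnit fun _ hx => by
      obtain ⟨j, -, rfl⟩ := List.mem_map.mp hx
      exact hW j
  refine ⟨fun k => ?_, ?_⟩
  · calc (Z (k : ℕ)).rank ≤ ((S (k + 1))ᵀ ⊗ₖ Z (k : ℕ)).rank :=
          rank_le_rank_kronecker_of_isUnit (hunit _) _
      _ ≤ G.rank := hblock k ▸ rank_submatrix_le G id (Prod.mk k)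
  · calc G.rank ≤ ∑ k : Fin L, ((S (k + 1))ᵀ ⊗ₖ Z (k : ℕ)).rank := by
          simpa only [hblock] using rank_le_sum_rank_submatrix_prodMk_right G
      _ ≤ ∑ k : Fin L, D * (Z (k : ℕ)).rank := Finset.sum_le_sum fun k _ => by
          simpa using rank_kronecker_le_card_mul_rank (S (k + 1))ᵀ (Z (k : ℕ))
      _ = D * ∑ k ∈ Finset.range L, (Z k).rank := by
          rw [← Finset.mul_sum, Fin.sum_univ_eq_sum_range (fun k => (Z k).rank)]

/-- For a linear `L`-layer network with invertible weights, gradient blocks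
`G^L_k = (∏_{i=L}^{k+1} W_i)ᵀ ⊗ Z_{k-1}` and `G` their horizontal concatenation,
the rank satisfies `max_k rank Z_{k-1} ≤ rank G ≤ D * ∑_{k=1}^L rank Z_{k-1}`. -/
theorem rank_bounds_linear_network_gradient (N D L : ℕ)
    (W : ℕ → Matrix (Fin D) (Fin D) ℝ) (hW : ∀ i : ℕ, IsUnit (W i))
    (Z : ℕ → Matrix (Fin N) (Fin D) ℝ)
    (hZ : ∀ i : ℕ, Z (i + 1) = Z i * W (i + 1))
    -- `S k = W_L * W_{L-1} * ⋯ * W_{k+1}` is the (descending) suffix weight product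
    (S : ℕ → Matrix (Fin D) (Fin D) ℝ)
    (hS : ∀ i : ℕ, S i = ((((List.range' (i + 1) (L - i))).reverse).map W).prod)
    -- `G` is the horizontal concatenation of the blocks `G^L_k = (S k)ᵀ ⊗ Z (k-1)`,
    -- for `k = 1, …, L` (block `c.1 : Fin L` corresponds to layer `k = c.1 + 1`)
    (G : Matrix (Fin D × Fin N) (Fin L × (Fin D × Fin D)) ℝ)
    (hG : G = Matrix.of fun r (c : Fin L × (Fin D × Fin D)) =>
        (((S ((c.1 : ℕ) + 1))ᵀ ⊗ₖ Z (c.1 : ℕ)) r c.2)) :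
    (∀ k : Fin L, (Z (k : ℕ)).rank ≤ G.rank) ∧
      G.rank ≤ D * ∑ k ∈ Finset.range L, (Z k).rank :=
  rank_bounds_linear_network_gradient_general N D L W hW Z S hS G hG
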